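/- arXiv:1906.06672 — 7 statements merged into one kernel-verified Lean document; each statement's English description precedes it below -/
import Mathlib

section
/- Let p₁, p₂ and k be positive integers, and let R₁, R₂ : ℝ → ℝ satisfy R₁(z) − e^{−z} = O(z^{p₁+1}) and R₂(z) − e^{−z} = O(z^{p₂+1}) as z → 0 (stability functions of Runge-Kutta schemes of orders p₁ and p₂). Then R₂(kz) − R₁(z)^k = O(z^{min(p₁,p₂)+1}) as z → 0. -/
/-!
Split `R₂(kz) - R₁(z)^k` through `e^{-kz} = (e^{-z})^k`. The first piece `R₂(kz) - e^{-kz}` is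
the order condition of `R₂` at the rescaled point `kz`, hence `O(z^{p₂+1})`. The second piece
`R₁(z)^k - (e^{-z})^k` factors as `(R₁(z) - e^{-z}) · ∑ᵢ R₁(z)^i e^{-(k-1-i)z}`, whose second
factor is bounded near `0`, hence it is `O(z^{p₁+1})`.
-/

open Filter Topology Asymptotics

namespace Asymptotics

section NormedField

variable {𝕜 E : Type*} [NormedField 𝕜] [Norm E]

theorem isBigO_pow_pow_nhds_zero_of_le {m n : ℕ} (h : m ≤ n) :
    (fun x : 𝕜 => x ^ n) =O[𝓝 0] fun x => x ^ m := by
  rcases h.lt_or_eq with h | rfl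
  · exact (isLittleO_pow_pow h).isBigO
  · exact isBigO_refl _ _

theorem IsBigO.comp_const_mul_of_pow {f : 𝕜 → E} {n : ℕ}
    (h : f =O[𝓝 0] fun x => x ^ n) (c : 𝕜) :
    (fun x => f (c * x)) =O[𝓝 0] fun x => x ^ n := by
  have hc : Tendsto (c * ·) (𝓝 (0 : 𝕜)) (𝓝 0) := (continuous_const_mul c).tendsto' 0 0 (mul_zero c)
  refine (h.comp_tendsto hc).trans ?_
  simpa only [Function.comp_def, mul_pow] using isBigO_const_mul_self (c ^ n) (fun x : 𝕜 => x ^ n) (𝓝 0)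

end NormedField

section NormedCommRing

variable {α R S : Type*} [NormedCommRing R] [NormedRing S] [NormMulClass S] [NormOneClass S]
  {l : Filter α}

theorem IsBigO.pow_sub_pow {f g : α → R} {u : α → S} (hfg : (fun x => f x - g x) =O[l] u)
    (hu : u =O[l] fun _ => (1 : S)) (hg : g =O[l] fun _ => (1 : S)) (n : ℕ) :
    (fun x => f x ^ n - g x ^ n) =O[l] u := by
  have hf : f =O[l] fun _ => (1 : S) := by
    simpa using (hfg.trans hu).add hg
  have hsum : (fun x => ∑ i ∈ Finset.range n, f x ^ i * g x ^ (n - 1 - i)) =O[l]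
      fun _ => (1 : S) := by
    refine IsBigO.fun_sum fun i _ => ?_
    simpa using (hf.pow i).mul (hg.pow (n - 1 - i))
  simpa only [geom_sum₂_mul, one_mul] using hsum.mul hfg

end NormedCommRing

end Asymptotics

theorem stmt_0_general (p₁ p₂ k : ℕ)
    (R₁ R₂ : ℝ → ℝ)
    (h₁ : (fun z : ℝ => R₁ z - Real.exp (-z)) =O[𝓝 0] fun z : ℝ => z ^ (p₁ + 1))
    (h₂ : (fun z : ℝ => R₂ z - Real.exp (-z)) =O[𝓝 0] fun z : ℝ => z ^ (p₂ + 1)) :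
    (fun z : ℝ => R₂ ((k : ℝ) * z) - (R₁ z) ^ k) =O[𝓝 0]
      fun z : ℝ => z ^ (min p₁ p₂ + 1) := by
  have hcoarse := h₂.comp_const_mul_of_pow (k : ℝ)
  have hpow_bdd : (fun z : ℝ => z ^ (p₁ + 1)) =O[𝓝 0] fun _ => (1 : ℝ) := by
    simpa using isBigO_pow_pow_nhds_zero_of_le (𝕜 := ℝ) (Nat.zero_le (p₁ + 1))
  have hexp_bdd : (fun z : ℝ => Real.exp (-z)) =O[𝓝 0] fun _ => (1 : ℝ) :=
    ((Real.continuous_exp.comp continuous_neg).tendsto 0).isBigO_one ℝ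
  have hfine := h₁.pow_sub_pow hpow_bdd hexp_bdd k
  have hsplit : ∀ z : ℝ, R₂ (k * z) - R₁ z ^ k =
      (R₂ (k * z) - Real.exp (-(k * z))) - (R₁ z ^ k - Real.exp (-z) ^ k) := by
    intro z
    rw [← Real.exp_nat_mul, mul_neg]
    ring
  simp only [hsplit]
  exact (hcoarse.trans (isBigO_pow_pow_nhds_zero_of_le (by omega))).sub
    (hfine.trans (isBigO_pow_pow_nhds_zero_of_le (by omega)))

/-- Scalar form of the paper's Lemma on `Ψ - Φ^k`: if `R₁` and `R₂` are stability
functions of Runge-Kutta schemes of orders `p₁` and `p₂` (i.e. they approximate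
`e^{-z}` to orders `p₁+1` and `p₂+1` at `z = 0`), then for coarsening factor `k`,
`R₂(kz) - R₁(z)^k = O(z^{min(p₁,p₂)+1})` as `z → 0`. -/
theorem stmt_0 (p₁ p₂ k : ℕ) (hp₁ : 0 < p₁) (hp₂ : 0 < p₂) (hk : 0 < k)
    (R₁ R₂ : ℝ → ℝ)
    (h₁ : (fun z : ℝ => R₁ z - Real.exp (-z)) =O[𝓝 0] fun z : ℝ => z ^ (p₁ + 1))
    (h₂ : (fun z : ℝ => R₂ z - Real.exp (-z)) =O[𝓝 0] fun z : ℝ => z ^ (p₂ + 1)) :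
    (fun z : ℝ => R₂ ((k : ℝ) * z) - (R₁ z) ^ k) =O[𝓝 0]
      fun z : ℝ => z ^ (min p₁ p₂ + 1) :=
  stmt_0_general p₁ p₂ k R₁ R₂ h₁ h₂
end

section
/- Let k be a positive integer and let λ, μ : ℝ → ℝ satisfy: μ(0) = 1, μ is differentiable at 0 with μ'(0) = −k, and μ(z) − λ(z)^k = O(z²) as z → 0⁺. Then lim_{z→0⁺} |μ(z) − λ(z)^k| / (1 − |μ(z)|) = 0. -/
/-!
Since `μ(0) = 1` and `μ'(0) = -k ≠ 0`, the denominator `1 - |μ z| = μ 0 - μ z` is eventually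
comparable to `z`, while the numerator is `O(z²) = o(z)`; hence the quotient tends to `0`.
-/

open Filter Topology Asymptotics

theorem HasDerivAt.isBigO_sub_rev {𝕜 F : Type*} [NontriviallyNormedField 𝕜]
    [NormedAddCommGroup F] [NormedSpace 𝕜 F] {f : 𝕜 → F} {f' : F} {x : 𝕜}
    (hf : HasDerivAt f f' x) (hf' : f' ≠ 0) :
    (fun z => z - x) =O[𝓝 x] fun z => f z - f x :=
  (HasDerivAtFilter.isTheta_sub hf hf').2.comp_tendsto (tendsto_id.prodMk tendsto_const_pure)

theorem HasDerivAt.isBigO_sub_abs_rev {f : ℝ → ℝ} {f' x : ℝ} (hf : HasDerivAt f f' x)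
    (hf' : f' ≠ 0) (hfx : 0 < f x) :
    (fun z => z - x) =O[𝓝 x] fun z => f x - |f z| := by
  refine (hf.isBigO_sub_rev hf').neg_right.congr' .rfl ?_
  filter_upwards [hf.continuousAt.eventually (eventually_gt_nhds hfx)] with z hz
  rw [abs_of_pos hz, neg_sub]

/-- F-relaxation part of the paper's Corollary: if `μ(0) = 1`, `μ` is differentiable
at `0` with `μ'(0) = -k`, and `μ(z) - λ(z)^k = O(z²)` as `z → 0⁺`, then the
tight two-grid convergence bound `|μ(z) - λ(z)^k| / (1 - |μ(z)|)` tends to `0`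
as `z → 0⁺`. -/
theorem stmt_2 (k : ℕ) (hk : 0 < k) (lam μ : ℝ → ℝ)
    (hμ0 : μ 0 = 1)
    (hμd : HasDerivAt μ (-(k : ℝ)) 0)
    (hO : (fun z : ℝ => μ z - (lam z) ^ k) =O[𝓝[>] 0] fun z : ℝ => z ^ 2) :
    Tendsto (fun z : ℝ => |μ z - (lam z) ^ k| / (1 - |μ z|)) (𝓝[>] 0) (𝓝 0) := by
  have hden : (fun z : ℝ => z) =O[𝓝 0] fun z => 1 - |μ z| := by
    simpa [hμ0] using hμd.isBigO_sub_abs_rev (by simp [hk.ne']) (by simp [hμ0])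
  have hsq : (fun z : ℝ => z ^ 2) =o[𝓝[>] 0] fun z => z :=
    (isLittleO_pow_id one_lt_two).mono nhdsWithin_le_nhds
  exact (isBigO_abs_left.2 hO |>.trans_isLittleO <|
    hsq.trans_isBigO (hden.mono nhdsWithin_le_nhds)).tendsto_div_nhds_zero
end

section
/- Let k be a positive integer and let λ, μ : ℝ → ℝ satisfy: μ(0) = 1, μ is differentiable at 0 with μ'(0) = −k, λ is continuous at 0 with λ(0) = 1, and μ(z) − λ(z)^k = O(z²) as z → 0⁺. Then lim_{z→0⁺} |λ(z)^k| · |μ(z) − λ(z)^k| / (1 − |μ(z)|) = 0. -/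
open Filter Topology Asymptotics

/-- FCF-relaxation part of the paper's Corollary: if `μ(0) = 1`, `μ` is differentiable
at `0` with `μ'(0) = -k`, `λ` is continuous at `0` with `λ(0) = 1`, and
`μ(z) - λ(z)^k = O(z²)` as `z → 0⁺`, then the tight two-grid FCF convergence bound
`|λ(z)^k| · |μ(z) - λ(z)^k| / (1 - |μ(z)|)` tends to `0` as `z → 0⁺`. -/
theorem stmt_3 (k : ℕ) (hk : 0 < k) (lam μ : ℝ → ℝ)
    (hμ0 : μ 0 = 1)
    (hμd : HasDerivAt μ (-(k : ℝ)) 0)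
    (hlamc : ContinuousAt lam 0) (hlam0 : lam 0 = 1)
    (hO : (fun z : ℝ => μ z - (lam z) ^ k) =O[𝓝[>] 0] fun z : ℝ => z ^ 2) :
    Tendsto (fun z : ℝ => |(lam z) ^ k| * |μ z - (lam z) ^ k| / (1 - |μ z|))
      (𝓝[>] 0) (𝓝 0) := by
  have hkpos : (0:ℝ) < (k:ℝ) := by exact_mod_cast hk
  obtain ⟨C, hC⟩ := hO.bound
  -- slope tends to -k along 𝓝[>] 0
  have hslope : Tendsto (fun z => (μ z - 1) / z) (𝓝[>] (0:ℝ)) (𝓝 (-(k:ℝ))) := by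
    have h1 := hasDerivAt_iff_tendsto_slope.mp hμd
    have h2 := h1.mono_left (nhdsWithin_mono 0 (fun x hx => ne_of_gt hx))
    refine h2.congr' ?_
    filter_upwards [self_mem_nhdsWithin] with z hz
    simp [slope_def_field, hμ0, div_eq_inv_mul, mul_comm]
  have hlt : ∀ᶠ z in 𝓝[>] (0:ℝ), (μ z - 1) / z < -((k:ℝ)/2) := by
    apply hslope.eventually_lt_const
    linarith
  -- μ z > 1/2 eventually
  have hμc : Tendsto μ (𝓝[>] (0:ℝ)) (𝓝 1) := by
    have := hμd.continuousAt.tendsto.mono_left (nhdsWithin_le_nhds (s := Set.Ioi (0:ℝ)))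
    rwa [hμ0] at this
  have hμpos : ∀ᶠ z in 𝓝[>] (0:ℝ), (1:ℝ)/2 < μ z :=
    hμc.eventually_const_lt (by norm_num)
  -- |lam z ^ k| ≤ 2 eventually
  have hlamk : Tendsto (fun z => |lam z ^ k|) (𝓝[>] (0:ℝ)) (𝓝 1) := by
    have : Tendsto (fun z => |lam z ^ k|) (𝓝 (0:ℝ)) (𝓝 |lam 0 ^ k|) :=
      ((hlamc.pow k).abs).tendsto
    rw [hlam0, one_pow, abs_one] at this
    exact this.mono_left nhdsWithin_le_nhds
  have hlam2 : ∀ᶠ z in 𝓝[>] (0:ℝ), |lam z ^ k| ≤ 2 :=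
    (hlamk.eventually_lt_const (by norm_num)).mono fun z hz => le_of_lt hz
  have hz0 : ∀ᶠ z in 𝓝[>] (0:ℝ), 0 < z := self_mem_nhdsWithin
  -- squeeze
  have hbound : Tendsto (fun z : ℝ => (4*C/(k:ℝ)) * z) (𝓝[>] (0:ℝ)) (𝓝 0) := by
    have : Tendsto (fun z : ℝ => (4*C/(k:ℝ)) * z) (𝓝 (0:ℝ)) (𝓝 ((4*C/(k:ℝ)) * 0)) :=
      (continuous_const.mul continuous_id).tendsto 0
    rw [mul_zero] at this
    exact this.mono_left nhdsWithin_le_nhds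
  refine squeeze_zero' ?_ ?_ hbound
  · filter_upwards [hlt, hμpos, hz0] with z h1 h2 h3
    have hden : 0 < 1 - |μ z| := by
      rw [abs_of_pos (by linarith)]
      have : μ z - 1 < -((k:ℝ)/2) * z := by
        rw [div_lt_iff₀ h3] at h1; linarith
      nlinarith
    positivity
  · filter_upwards [hlt, hμpos, hz0, hlam2, hC] with z h1 h2 h3 h4 h5
    have hzz : μ z - 1 < -((k:ℝ)/2) * z := by
      rw [div_lt_iff₀ h3] at h1; linarith
    have hden : ((k:ℝ)/2) * z ≤ 1 - |μ z| := by
      rw [abs_of_pos (by linarith)]; linarith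
    have hnum : |μ z - lam z ^ k| ≤ C * z ^ 2 := by
      have := h5
      simp only [Real.norm_eq_abs] at this
      calc |μ z - lam z ^ k| ≤ C * |z ^ 2| := this
        _ = C * z ^ 2 := by rw [abs_of_nonneg (sq_nonneg z)]
    have hnum' : |lam z ^ k| * |μ z - lam z ^ k| ≤ 2 * (C * z ^ 2) :=
      mul_le_mul h4 hnum (abs_nonneg _) (by norm_num)
    have hCz : 0 ≤ C * z ^ 2 := le_trans (abs_nonneg _) hnum
    have key : |lam z ^ k| * |μ z - lam z ^ k| / (1 - |μ z|) ≤
        2 * (C * z ^ 2) / (((k:ℝ)/2) * z) := by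
      apply div_le_div₀ (by linarith) hnum' (by positivity) hden
    refine key.trans (le_of_eq ?_)
    field_simp
    ring
end

section
/- Let k be a positive integer and let λ, μ : ℝ → ℝ satisfy |λ(z)| ≤ 1 for all z ≥ 0 (A-stability along the positive real axis) and μ(z) → 0 as z → +∞ (L-stability). Then limsup_{z→+∞} |μ(z) − λ(z)^k| / (1 − |μ(z)|) ≤ 1 and limsup_{z→+∞} |λ(z)^k| · |μ(z) − λ(z)^k| / (1 − |μ(z)|) ≤ 1. -/
open Filter Topology

lemma aux_limsup_le_one (u : ℝ → ℝ)
    (h0 : ∀ᶠ z in atTop, 0 ≤ u z)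
    (hb : ∀ b : ℝ, 1 < b → ∀ᶠ z in atTop, u z ≤ b) :
    limsup u atTop ≤ 1 := by
  have hbd : IsBoundedUnder (· ≥ ·) atTop u := ⟨0, by simpa [eventually_map] using h0⟩
  have hcb : IsCoboundedUnder (· ≤ ·) atTop u := hbd.isCoboundedUnder_le
  refine le_of_forall_gt_imp_ge_of_dense fun b hb1 => ?_
  exact limsup_le_of_le hcb (hb b hb1)

/-- First part of the paper's Proposition on L-stable coarse-grid schemes:
if `|λ(z)| ≤ 1` for all `z ≥ 0` (A-stability along the positive real axis) and
`μ(z) → 0` as `z → +∞` (L-stability), then the F- and FCF-relaxation convergence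
bounds have `limsup ≤ 1` as `z → +∞`. -/
theorem stmt_4 (k : ℕ) (hk : 0 < k) (lam μ : ℝ → ℝ)
    (hlam : ∀ z : ℝ, 0 ≤ z → |lam z| ≤ 1)
    (hμ : Tendsto μ atTop (𝓝 0)) :
    limsup (fun z : ℝ => |μ z - (lam z) ^ k| / (1 - |μ z|)) atTop ≤ 1 ∧
    limsup (fun z : ℝ => |(lam z) ^ k| * |μ z - (lam z) ^ k| / (1 - |μ z|)) atTop ≤ 1 := by
  -- key eventual bound
  have key : ∀ b : ℝ, 1 < b →
      ∀ᶠ z in atTop, |μ z - (lam z) ^ k| / (1 - |μ z|) ≤ b ∧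
        0 ≤ |μ z - (lam z) ^ k| / (1 - |μ z|) ∧ |(lam z) ^ k| ≤ 1 := by
    intro b hb1
    set ε : ℝ := (b - 1) / (b + 1) with hε
    have hbpos : (0:ℝ) < b + 1 := by linarith
    have hε0 : 0 < ε := div_pos (by linarith) hbpos
    have hε1 : ε < 1 := (div_lt_one hbpos).mpr (by linarith)
    have hsmall : ∀ᶠ z in atTop, |μ z| < ε := by
      have := hμ (Metric.ball_mem_nhds (0:ℝ) hε0)
      filter_upwards [this] with z hz
      simpa [Real.dist_eq] using hz
    filter_upwards [hsmall, eventually_ge_atTop (0:ℝ)] with z hz hz0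
    have hlk : |(lam z) ^ k| ≤ 1 := by
      rw [abs_pow]
      exact pow_le_one₀ (abs_nonneg _) (hlam z hz0)
    have hden : 0 < 1 - |μ z| := by linarith
    have hnum : |μ z - (lam z) ^ k| ≤ 1 + ε := by
      calc |μ z - (lam z) ^ k| ≤ |μ z| + |(lam z) ^ k| := abs_sub _ _
        _ ≤ 1 + ε := by linarith
    have hratio : |μ z - (lam z) ^ k| / (1 - |μ z|) ≤ (1 + ε) / (1 - ε) := by
      exact div_le_div₀ (by positivity) hnum (by linarith) (by linarith)
    have heq : (1 + ε) / (1 - ε) = b := by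
      rw [hε]
      field_simp
      ring
    refine ⟨by rwa [heq] at hratio, by positivity, hlk⟩
  constructor
  · apply aux_limsup_le_one
    · filter_upwards [key 2 one_lt_two] with z hz using hz.2.1
    · intro b hb
      filter_upwards [key b hb] with z hz using hz.1
  · apply aux_limsup_le_one
    · filter_upwards [key 2 one_lt_two] with z hz
      rw [mul_div_assoc]
      exact mul_nonneg (abs_nonneg _) hz.2.1
    · intro b hb
      filter_upwards [key b hb] with z ⟨h1, h2, h3⟩
      rw [mul_div_assoc]
      calc |(lam z) ^ k| * (|μ z - (lam z) ^ k| / (1 - |μ z|)) ≤ 1 * b := by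
            exact mul_le_mul h3 h1 h2 zero_le_one
        _ = b := one_mul b
end

section
/- Let s ≥ 1 and k ≥ 2 be integers and z a real number. Then Σ_{ℓ=0}^{s} (−kz)^ℓ/ℓ! = (Σ_{ℓ=0}^{s} (−z)^ℓ/ℓ!)^k if and only if (s!)^{k−1} · ∫_{−kz}^{∞} t^s e^{−t} dt = (∫_{−z}^{∞} t^s e^{−t} dt)^k. -/
/-!
Since `P n' = P n - t ^ n / n!` for the truncated exponential series `P n`, the function
`-n! * exp (-t) * P n t` is an antiderivative of `t ^ n * exp (-t)`, whence
`Γ(n + 1, x) = n! * exp (-x) * P n x`. At `x = -k z` and `x = -z` the exponential factors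
`exp (k z) = exp z ^ k` match, so after cancelling `n! ^ k * exp (k z) ≠ 0` both equations say
`P n (-k z) = P n (-z) ^ k`.
-/

open MeasureTheory Finset Real Filter Topology Asymptotics

noncomputable def expPartialSum (n : ℕ) (x : ℝ) : ℝ :=
  ∑ ℓ ∈ range (n + 1), x ^ ℓ / ℓ.factorial

lemma hasDerivAt_pow_succ_div_factorial (n : ℕ) (x : ℝ) :
    HasDerivAt (fun t : ℝ => t ^ (n + 1) / (n + 1).factorial) (x ^ n / n.factorial) x := by
  refine ((hasDerivAt_pow (n + 1) x).div_const ((n + 1).factorial : ℝ)).congr_deriv ?_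
  rw [Nat.factorial_succ, Nat.cast_mul, Nat.add_sub_cancel]
  field_simp

lemma hasDerivAt_expPartialSum (n : ℕ) (x : ℝ) :
    HasDerivAt (expPartialSum n) (expPartialSum n x - x ^ n / n.factorial) x := by
  induction n with
  | zero =>
    have h0 : expPartialSum 0 = fun _ => 1 := funext fun _ => by simp [expPartialSum]
    simpa [h0] using hasDerivAt_const x (1 : ℝ)
  | succ n ih =>
    have hsucc : expPartialSum (n + 1) =
        fun t => expPartialSum n t + t ^ (n + 1) / (n + 1).factorial :=
      funext fun t => sum_range_succ _ _
    rw [hsucc]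
    refine (ih.add (hasDerivAt_pow_succ_div_factorial n x)).congr_deriv ?_
    ring

lemma hasDerivAt_exp_neg_mul_expPartialSum (n : ℕ) (x : ℝ) :
    HasDerivAt (fun t => exp (-t) * expPartialSum n t) (-(x ^ n / n.factorial * exp (-x))) x := by
  have hexp : HasDerivAt (fun t => exp (-t)) (-exp (-x)) x := by
    simpa using (hasDerivAt_neg x).exp
  refine (hexp.mul (hasDerivAt_expPartialSum n x)).congr_deriv ?_
  ring

lemma tendsto_exp_neg_mul_expPartialSum_atTop (n : ℕ) :
    Tendsto (fun t => exp (-t) * expPartialSum n t) atTop (𝓝 0) := by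
  have h : Tendsto (fun t => ∑ ℓ ∈ range (n + 1), t ^ ℓ * exp (-t) / ℓ.factorial) atTop
      (𝓝 (∑ ℓ ∈ range (n + 1), (0 : ℝ) / ℓ.factorial)) :=
    tendsto_finsetSum _ fun ℓ _ => (tendsto_pow_mul_exp_neg_atTop_nhds_zero ℓ).div_const _
  simp only [zero_div, sum_const_zero] at h
  refine h.congr fun t => ?_
  rw [expPartialSum, mul_sum]
  exact sum_congr rfl fun ℓ _ => by ring

lemma integrableOn_pow_mul_exp_neg_Ioi (n : ℕ) (x : ℝ) :
    IntegrableOn (fun t : ℝ => t ^ n * exp (-t)) (Set.Ioi x) := by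
  refine integrable_of_isBigO_exp_neg (b := 1 / 2) (by norm_num) (by fun_prop) ?_
  have hpow : (fun t : ℝ => t ^ n) =O[atTop] fun t => exp (1 / 2 * t) :=
    (isLittleO_pow_exp_pos_mul_atTop n (by norm_num)).isBigO
  refine (hpow.mul (isBigO_refl (fun t => exp (-t)) atTop)).congr_right fun t => ?_
  rw [← exp_add]
  ring_nf

theorem integral_pow_mul_exp_neg_Ioi (n : ℕ) (x : ℝ) :
    ∫ t in Set.Ioi x, t ^ n * exp (-t) = n.factorial * (exp (-x) * expPartialSum n x) := by
  have hderiv (t : ℝ) : HasDerivAt (fun t => -(n.factorial * (exp (-t) * expPartialSum n t)))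
      (t ^ n * exp (-t)) t := by
    refine ((hasDerivAt_exp_neg_mul_expPartialSum n t).const_mul
      (n.factorial : ℝ)).neg.congr_deriv ?_
    field_simp
  have hlim := ((tendsto_exp_neg_mul_expPartialSum_atTop n).const_mul (n.factorial : ℝ)).neg
  rw [mul_zero, neg_zero] at hlim
  rw [integral_Ioi_of_hasDerivAt_of_tendsto' (fun t _ => hderiv t)
    (integrableOn_pow_mul_exp_neg_Ioi n x) hlim]
  ring

theorem stmt_8_general (s k : ℕ) (hk : 2 ≤ k) (z : ℝ) :
    (∑ ℓ ∈ Finset.range (s + 1), (-((k : ℝ) * z)) ^ ℓ / ℓ.factorial =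
        (∑ ℓ ∈ Finset.range (s + 1), (-z) ^ ℓ / ℓ.factorial) ^ k) ↔
      ((s.factorial : ℝ)) ^ (k - 1) * (∫ t in Set.Ioi (-((k : ℝ) * z)), t ^ s * Real.exp (-t)) =
        (∫ t in Set.Ioi (-z), t ^ s * Real.exp (-t)) ^ k := by
  change expPartialSum s _ = expPartialSum s _ ^ k ↔ _
  have hexp : exp (-(-((k : ℝ) * z))) = exp (-(-z)) ^ k := by
    rw [neg_neg, neg_neg, exp_nat_mul]
  rw [integral_pow_mul_exp_neg_Ioi, integral_pow_mul_exp_neg_Ioi, hexp, ← mul_assoc,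
    pow_sub_one_mul (by omega), mul_pow, mul_pow,
    mul_right_inj' (by positivity), mul_right_inj' (by positivity)]

/-- Scalar equivalence in the paper's Corollary characterizing non-invertibility of
`Ψ - Φ^k` via incomplete Gamma functions: for integers `s ≥ 1`, `k ≥ 2` and real `z`,
`Σ_{ℓ=0}^{s} (-kz)^ℓ/ℓ! = (Σ_{ℓ=0}^{s} (-z)^ℓ/ℓ!)^k` if and only if
`(s!)^{k-1} Γ(s+1, -kz) = Γ(s+1, -z)^k`, where `Γ(s+1, x) = ∫_{x}^{∞} t^s e^{-t} dt`. -/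
theorem stmt_8 (s k : ℕ) (hs : 1 ≤ s) (hk : 2 ≤ k) (z : ℝ) :
    (∑ ℓ ∈ Finset.range (s + 1), (-((k : ℝ) * z)) ^ ℓ / ℓ.factorial =
        (∑ ℓ ∈ Finset.range (s + 1), (-z) ^ ℓ / ℓ.factorial) ^ k) ↔
      ((s.factorial : ℝ)) ^ (k - 1) * (∫ t in Set.Ioi (-((k : ℝ) * z)), t ^ s * Real.exp (-t)) =
        (∫ t in Set.Ioi (-z), t ^ s * Real.exp (-t)) ^ k :=
  stmt_8_general s k hk z
end

section
/- Let k be a positive integer, θ ∈ [0,1), and let λ, μ : ℝ → ℝ be continuous at 0 from the right with λ(0) = μ(0) = 1. Then lim_{z→0⁺} |θ·μ(z) − λ(z)^k| / (1 − θ·|μ(z)|) = 1. -/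
open Filter Topology

theorem Filter.Tendsto.div_of_tendsto_same {α 𝕜 : Type*} [DivisionRing 𝕜] [TopologicalSpace 𝕜]
    [ContinuousMul 𝕜] [ContinuousInv₀ 𝕜] {l : Filter α} {f g : α → 𝕜} {a : 𝕜}
    (hf : Tendsto f l (𝓝 a)) (hg : Tendsto g l (𝓝 a)) (ha : a ≠ 0) :
    Tendsto (fun x => f x / g x) l (𝓝 1) :=
  div_self ha ▸ hf.div hg ha

theorem stmt_11_general (k : ℕ) (θ : ℝ) (hθ1 : θ < 1)
    (lam μ : ℝ → ℝ)
    (hlamc : ContinuousWithinAt lam (Set.Ici 0) 0)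
    (hμc : ContinuousWithinAt μ (Set.Ici 0) 0)
    (hlam0 : lam 0 = 1) (hμ0 : μ 0 = 1) :
    Tendsto (fun z : ℝ => |θ * μ z - (lam z) ^ k| / (1 - θ * |μ z|))
      (𝓝[>] 0) (𝓝 1) := by
  have hlam : Tendsto lam (𝓝[>] 0) (𝓝 1) :=
    hlam0 ▸ (hlamc.mono Set.Ioi_subset_Ici_self).tendsto
  have hμ : Tendsto μ (𝓝[>] 0) (𝓝 1) :=
    hμ0 ▸ (hμc.mono Set.Ioi_subset_Ici_self).tendsto
  have hnum : Tendsto (fun z => |θ * μ z - lam z ^ k|) (𝓝[>] 0) (𝓝 (1 - θ)) := by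
    have h := (((tendsto_const_nhds (x := θ)).mul hμ).sub (hlam.pow k)).abs
    rwa [mul_one, one_pow, abs_sub_comm, abs_of_pos (sub_pos.2 hθ1)] at h
  have hden : Tendsto (fun z => 1 - θ * |μ z|) (𝓝[>] 0) (𝓝 (1 - θ)) := by
    simpa only [abs_one, mul_one] using (tendsto_const_nhds (x := (1 : ℝ))).sub
      ((tendsto_const_nhds (x := θ)).mul hμ.abs)
  exact hnum.div_of_tendsto_same hden (sub_ne_zero.2 hθ1.ne')

/-- θ-Parareal loses the exact approximation property as `h_tξ → 0⁺`: for any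
weight `θ ∈ [0,1)` and any stability functions with `λ(0) = μ(0) = 1` continuous
at `0` from the right, the weighted convergence bound
`|θμ(z) - λ(z)^k|/(1 - θ|μ(z)|)` tends to `1` as `z → 0⁺`. -/
theorem stmt_11 (k : ℕ) (hk : 0 < k) (θ : ℝ) (hθ0 : 0 ≤ θ) (hθ1 : θ < 1)
    (lam μ : ℝ → ℝ)
    (hlamc : ContinuousWithinAt lam (Set.Ici 0) 0)
    (hμc : ContinuousWithinAt μ (Set.Ici 0) 0)
    (hlam0 : lam 0 = 1) (hμ0 : μ 0 = 1) :
    Tendsto (fun z : ℝ => |θ * μ z - (lam z) ^ k| / (1 - θ * |μ z|))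
      (𝓝[>] 0) (𝓝 1) :=
  stmt_11_general k θ hθ1 lam μ hlamc hμc hlam0 hμ0
end

section
/- Fix an integer N_c ≥ 1 and a real C > 0. Let λ(z) = (2 − z)/(2 + z) (the stability function of Crank–Nicolson at step z) and μ(z) = 1/(1 + 2z) (the stability function of backward Euler at step 2z). Then as z → +∞, |μ(z) − λ(z)²| / sqrt((1 − |μ(z)|)² + π²|μ(z)|/(C·N_c²)) → 1. In particular, for every ε > 0 there exists z > 0 such that this ratio exceeds 1 − ε, so Parareal/two-level MGRIT with F-relaxation using Crank–Nicolson on the fine grid, backward Euler on the coarse grid, and coarsening factor k = 2 can observe arbitrarily slow convergence for large h_tξ. -/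
open Filter Topology Real

lemma mu_tendsto : Tendsto (fun z : ℝ => 1 / (1 + 2 * z)) atTop (𝓝 0) := by
  apply Tendsto.div_atTop tendsto_const_nhds
  apply tendsto_atTop_add_const_left
  exact Tendsto.const_mul_atTop two_pos tendsto_id

lemma lam_tendsto : Tendsto (fun z : ℝ => (2 - z) / (2 + z)) atTop (𝓝 (-1)) := by
  have h : ∀ᶠ z : ℝ in atTop, -1 + 4 / (2 + z) = (2 - z) / (2 + z) := by
    filter_upwards [eventually_gt_atTop (0 : ℝ)] with z hz
    field_simp
    ring
  apply Tendsto.congr' h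
  have h2 : Tendsto (fun z : ℝ => 4 / (2 + z)) atTop (𝓝 0) := by
    apply Tendsto.div_atTop tendsto_const_nhds
    apply tendsto_atTop_add_const_left
    exact tendsto_id
  simpa using (tendsto_const_nhds.add h2)

/-- The paper's Lemma on Crank–Nicolson: with `λ(z) = (2-z)/(2+z)` (Crank–Nicolson)
and `μ(z) = 1/(1+2z)` (backward Euler with step `2z`), for any fixed `N_c ≥ 1` and
`C > 0`, the tight F-relaxation convergence bound
`|μ(z) - λ(z)²| / sqrt((1 - |μ(z)|)² + π²|μ(z)|/(C·N_c²))` tends to `1` as `z → +∞`;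
in particular, for every `ε > 0` there is `z > 0` where it exceeds `1 - ε`, so
Parareal/two-level MGRIT with F-relaxation, Crank–Nicolson on the fine grid, backward
Euler on the coarse grid, and `k = 2` can converge arbitrarily slowly. -/
theorem stmt_12 (N_c : ℕ) (hN : 1 ≤ N_c) (C : ℝ) (hC : 0 < C) :
    Tendsto
        (fun z : ℝ =>
          |1 / (1 + 2 * z) - ((2 - z) / (2 + z)) ^ 2| /
            Real.sqrt ((1 - |1 / (1 + 2 * z)|) ^ 2 +
              Real.pi ^ 2 * |1 / (1 + 2 * z)| / (C * (N_c : ℝ) ^ 2)))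
        atTop (𝓝 1) ∧
      ∀ ε > (0 : ℝ), ∃ z > (0 : ℝ),
        |1 / (1 + 2 * z) - ((2 - z) / (2 + z)) ^ 2| /
            Real.sqrt ((1 - |1 / (1 + 2 * z)|) ^ 2 +
              Real.pi ^ 2 * |1 / (1 + 2 * z)| / (C * (N_c : ℝ) ^ 2)) > 1 - ε := by
  have hnum : Tendsto (fun z : ℝ => |1 / (1 + 2 * z) - ((2 - z) / (2 + z)) ^ 2|)
      atTop (𝓝 1) := by
    have h := (mu_tendsto.sub (lam_tendsto.pow 2)).abs
    have e : |(0:ℝ) - (-1)^2| = 1 := by norm_num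
    rwa [e] at h
  have hden : Tendsto (fun z : ℝ => Real.sqrt ((1 - |1 / (1 + 2 * z)|) ^ 2 +
      Real.pi ^ 2 * |1 / (1 + 2 * z)| / (C * (N_c : ℝ) ^ 2))) atTop (𝓝 1) := by
    have h1 : Tendsto (fun z : ℝ => (1 - |1 / (1 + 2 * z)|) ^ 2 +
        Real.pi ^ 2 * |1 / (1 + 2 * z)| / (C * (N_c : ℝ) ^ 2)) atTop (𝓝 1) := by
      have h := (((tendsto_const_nhds (x := (1:ℝ))).sub mu_tendsto.abs).pow 2).add
        ((((tendsto_const_nhds (x := Real.pi ^ 2)).mul mu_tendsto.abs).div_const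
          (C * (N_c : ℝ) ^ 2)))
      have e : ((1:ℝ) - |0|) ^ 2 + Real.pi ^ 2 * |0| / (C * (N_c : ℝ) ^ 2) = 1 := by
        norm_num
      rwa [e] at h
    have h2 := (Real.continuous_sqrt.tendsto 1).comp h1
    rw [Real.sqrt_one] at h2
    exact h2
  have hmain : Tendsto
      (fun z : ℝ =>
        |1 / (1 + 2 * z) - ((2 - z) / (2 + z)) ^ 2| /
          Real.sqrt ((1 - |1 / (1 + 2 * z)|) ^ 2 +
            Real.pi ^ 2 * |1 / (1 + 2 * z)| / (C * (N_c : ℝ) ^ 2)))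
      atTop (𝓝 1) := by
    have h := hnum.div hden one_ne_zero
    rw [div_one] at h
    exact h
  refine ⟨hmain, fun ε hε => ?_⟩
  have h1 : ∀ᶠ z : ℝ in atTop,
      |1 / (1 + 2 * z) - ((2 - z) / (2 + z)) ^ 2| /
        Real.sqrt ((1 - |1 / (1 + 2 * z)|) ^ 2 +
          Real.pi ^ 2 * |1 / (1 + 2 * z)| / (C * (N_c : ℝ) ^ 2)) > 1 - ε :=
    hmain.eventually (eventually_gt_nhds (by linarith))
  obtain ⟨z, hz1, hz2⟩ := (h1.and (eventually_gt_atTop 0)).exists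
  exact ⟨z, hz2, hz1⟩
end
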